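/- Let γ, γ' be distinct points of Γ with γ_j < γ'_j, let t > 0, and let β ∈ W_{γ,t} \ U_γ^j with β_j < γ_j, and β' ∈ W_{γ',0} \ W_{γ, δ₁ t}. Then the intervals B_{ρ d_Γ(β)}(β_j) and B_{ρ d_Γ(β')}(β'_j) in ℝ are disjoint, where ρ = (δ₂ - δ₁)/(1 + δ₁). -/

import Mathlib

open Metric
open RealInnerProductSpace


private lemma normsq3 (x : EuclideanSpace ℝ (Fin 3)) :
    ‖x‖^2 = (x 0)^2 + (x 1)^2 + (x 2)^2 := by
  rw [EuclideanSpace.norm_eq, Real.sq_sqrt (by positivity)]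
  simp [Fin.sum_univ_three]

private lemma subc (x y : EuclideanSpace ℝ (Fin 3)) (i : Fin 3) : (x - y) i = x i - y i := by
  simp

private lemma coord_le_norm (x : EuclideanSpace ℝ (Fin 3)) (i : Fin 3) : |x i| ≤ ‖x‖ := by
  have h := normsq3 x
  have h2 : (x i)^2 ≤ ‖x‖^2 := by
    fin_cases i <;> simp_all <;>
      nlinarith [sq_nonneg (x 0), sq_nonneg (x 1), sq_nonneg (x 2)]
  nlinarith [abs_nonneg (x i), norm_nonneg x, sq_abs (x i)]

private lemma sumsq3 (x : EuclideanSpace ℝ (Fin 3)) (hs : x 0 + x 1 + x 2 = 0)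
    (i k : Fin 3) (hik : i ≠ k) :
    ‖x‖^2 = (x k)^2 + (x i)^2 + (x k + x i)^2 := by
  rw [normsq3]
  fin_cases i <;> fin_cases k <;> simp_all <;>
    first
      | linear_combination (x 0 + x 1 + x 2 - 2 * x 0) * hs
      | linear_combination (x 0 + x 1 + x 2 - 2 * x 1) * hs
      | linear_combination (x 0 + x 1 + x 2 - 2 * x 2) * hs
      | linear_combination (2 * x 0 - (x 0 + x 1 + x 2)) * hs
      | linear_combination (2 * x 1 - (x 0 + x 1 + x 2)) * hs
      | linear_combination (2 * x 2 - (x 0 + x 1 + x 2)) * hs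

private lemma close_dir {E : Type*} [NormedAddCommGroup E] [InnerProductSpace ℝ E]
    (w x : E) (θ : ℝ) (h : ‖w - x‖ < Real.sin θ * ‖w‖) :
    Real.cos θ * (‖x‖ * ‖w‖) < ⟪x, w⟫ := by
  have h0 : 0 ≤ ‖w - x‖ := norm_nonneg _
  have h1 : ‖w - x‖^2 < (Real.sin θ * ‖w‖)^2 := by nlinarith
  have h2 := norm_sub_sq_real w x
  have h3 := Real.sin_sq_add_cos_sq θ
  have h4 := real_inner_comm w x
  nlinarith [sq_nonneg (Real.cos θ * ‖w‖ - ‖x‖)]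

private lemma cos_tri_unit {E : Type*} [NormedAddCommGroup E] [InnerProductSpace ℝ E]
    (a b c : E) (ha : ‖a‖ = 1) (hb : ‖b‖ = 1) (hc : ‖c‖ = 1) (x y : ℝ)
    (hx0 : 0 ≤ x) (hx2 : x ≤ Real.pi/2) (hy0 : 0 ≤ y) (hy2 : y ≤ Real.pi/2)
    (h1 : Real.cos x ≤ ⟪a, b⟫) (h2 : Real.cos y ≤ ⟪a, c⟫) :
    Real.cos (x + y) ≤ ⟪b, c⟫ := by
  have hπ := Real.pi_pos
  have hcx : 0 ≤ Real.cos x := Real.cos_nonneg_of_mem_Icc ⟨by linarith, hx2⟩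
  have hcy : 0 ≤ Real.cos y := Real.cos_nonneg_of_mem_Icc ⟨by linarith, hy2⟩
  have hsx : 0 ≤ Real.sin x := Real.sin_nonneg_of_nonneg_of_le_pi hx0 (by linarith)
  have hsy : 0 ≤ Real.sin y := Real.sin_nonneg_of_nonneg_of_le_pi hy0 (by linarith)
  set s := ⟪a, b⟫ with hs
  set t := ⟪a, c⟫ with hts
  have hs1 : s ≤ 1 := by
    have := real_inner_le_norm a b
    rw [ha, hb] at this; simpa using this
  have ht1 : t ≤ 1 := by
    have := real_inner_le_norm a c
    rw [ha, hc] at this; simpa using this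
  have haa : ⟪a, a⟫ = 1 := by
    rw [real_inner_self_eq_norm_sq, ha]; norm_num
  have key : ⟪b - s • a, c - t • a⟫ = ⟪b, c⟫ - s * t := by
    simp only [inner_sub_left, inner_sub_right, real_inner_smul_left,
      real_inner_smul_right, haa]
    rw [hs, hts, real_inner_comm b a]
    ring
  have hbn : ‖b - s • a‖^2 = 1 - s^2 := by
    have hh := norm_sub_sq_real b (s • a)
    rw [real_inner_smul_right, real_inner_comm, norm_smul, ha, hb, ← hs] at hh
    rw [hh, Real.norm_eq_abs]
    rw [mul_one, sq_abs]
    ring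
  have hcn : ‖c - t • a‖^2 = 1 - t^2 := by
    have hh := norm_sub_sq_real c (t • a)
    rw [real_inner_smul_right, real_inner_comm, norm_smul, ha, hc, ← hts] at hh
    rw [hh, Real.norm_eq_abs]
    rw [mul_one, sq_abs]
    ring
  have hb1 : ‖b - s • a‖ ≤ Real.sin x := by
    nlinarith [norm_nonneg (b - s • a), Real.sin_sq_add_cos_sq x]
  have hc1 : ‖c - t • a‖ ≤ Real.sin y := by
    nlinarith [norm_nonneg (c - t • a), Real.sin_sq_add_cos_sq y]
  have hcs := abs_real_inner_le_norm (b - s • a) (c - t • a)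
  have hmul : ‖b - s • a‖ * ‖c - t • a‖ ≤ Real.sin x * Real.sin y :=
    mul_le_mul hb1 hc1 (norm_nonneg _) hsx
  have hst : Real.cos x * Real.cos y ≤ s * t :=
    mul_le_mul h1 h2 hcy (le_trans hcx h1)
  have hlow : -(‖b - s • a‖ * ‖c - t • a‖) ≤ ⟪b - s • a, c - t • a⟫ := neg_le_of_abs_le hcs
  rw [Real.cos_add]
  linarith [key]


noncomputable def whitneyP (k : Fin 3) : EuclideanSpace ℝ (Fin 3) :=
  (WithLp.equiv 2 (Fin 3 → ℝ)).symm
    (fun i => if i = k then Real.sqrt 6 / 3 else -(Real.sqrt 6) / 6)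

lemma whitneyP_apply (k i : Fin 3) :
    whitneyP k i = if i = k then Real.sqrt 6 / 3 else -(Real.sqrt 6) / 6 := rfl

private lemma normsq3' (x : EuclideanSpace ℝ (Fin 3)) :
    ‖x‖^2 = (x 0)^2 + (x 1)^2 + (x 2)^2 := by
  rw [EuclideanSpace.norm_eq, Real.sq_sqrt (by positivity)]
  simp [Fin.sum_univ_three]

lemma whitneyP_norm (k : Fin 3) : ‖whitneyP k‖ = 1 := by
  have h6 : Real.sqrt 6 ^ 2 = 6 := Real.sq_sqrt (by norm_num)
  have h : ‖whitneyP k‖^2 = 1 := by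
    rw [normsq3']
    fin_cases k <;> simp [whitneyP_apply] <;> nlinarith [h6]
  nlinarith [norm_nonneg (whitneyP k)]

lemma whitneyP_inner (x : EuclideanSpace ℝ (Fin 3)) (hs : x 0 + x 1 + x 2 = 0) (k : Fin 3) :
    ⟪x, whitneyP k⟫ = Real.sqrt 6 / 2 * x k := by
  have hin : ⟪x, whitneyP k⟫ =
      x 0 * whitneyP k 0 + x 1 * whitneyP k 1 + x 2 * whitneyP k 2 := by
    simp [PiLp.inner_apply, Fin.sum_univ_three]; ring
  rw [hin]
  fin_cases k <;> simp [whitneyP_apply] <;>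
    linear_combination (-(Real.sqrt 6) / 6) * hs

private lemma inner_unit_coord (x : EuclideanSpace ℝ (Fin 3)) (hx : 0 < ‖x‖)
    (hs : x 0 + x 1 + x 2 = 0) (k : Fin 3) (s c : ℝ)
    (hsx : s * x k = |x k|)
    (hbound : Real.sqrt 6 / 3 * ‖x‖ * c ≤ |x k|) :
    c ≤ ⟪‖x‖⁻¹ • x, s • whitneyP k⟫ := by
  rw [real_inner_smul_left, real_inner_smul_right, whitneyP_inner x hs k]
  have h6 : Real.sqrt 6 ^ 2 = 6 := Real.sq_sqrt (by norm_num)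
  have h6p : (0:ℝ) < Real.sqrt 6 := Real.sqrt_pos.mpr (by norm_num)
  have he : ‖x‖⁻¹ * (s * (Real.sqrt 6 / 2 * x k)) = (Real.sqrt 6 / 2 * |x k|) / ‖x‖ := by
    rw [← hsx]; field_simp
  rw [he, le_div_iff₀ hx]
  have h2' := mul_le_mul_of_nonneg_left hbound
    (le_of_lt (by positivity : (0:ℝ) < Real.sqrt 6 / 2))
  have heq : Real.sqrt 6 / 2 * (Real.sqrt 6 / 3 * ‖x‖ * c) = c * ‖x‖ := by
    linear_combination (‖x‖ * c / 6) * h6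
  linarith

private lemma coord_of_inner (x : EuclideanSpace ℝ (Fin 3)) (hx : 0 < ‖x‖)
    (hs : x 0 + x 1 + x 2 = 0) (k : Fin 3) (c : ℝ)
    (h : c ≤ ⟪‖x‖⁻¹ • x, whitneyP k⟫) :
    Real.sqrt 6 / 3 * c * ‖x‖ ≤ x k := by
  rw [real_inner_smul_left, whitneyP_inner x hs k] at h
  have h6 : Real.sqrt 6 ^ 2 = 6 := Real.sq_sqrt (by norm_num)
  have h6p : (0:ℝ) < Real.sqrt 6 := Real.sqrt_pos.mpr (by norm_num)
  have h' : c * ‖x‖ ≤ Real.sqrt 6 / 2 * x k := by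
    have h2 := mul_le_mul_of_nonneg_right h hx.le
    calc c * ‖x‖ ≤ ‖x‖⁻¹ * (Real.sqrt 6 / 2 * x k) * ‖x‖ := h2
    _ = Real.sqrt 6 / 2 * x k := by field_simp
  have h2' := mul_le_mul_of_nonneg_left h'
    (le_of_lt (by positivity : (0:ℝ) < Real.sqrt 6 / 3))
  have heq : Real.sqrt 6 / 3 * (Real.sqrt 6 / 2 * x k) = x k := by
    linear_combination (x k / 6) * h6
  linarith

private lemma sqrt63 : Real.sqrt 6 * Real.sqrt 3 = 3 * Real.sqrt 2 := by
  rw [← Real.sqrt_mul (by norm_num : (0:ℝ) ≤ 6)]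
  rw [show (6:ℝ) * 3 = 3^2 * 2 by norm_num,
    Real.sqrt_mul (by positivity), Real.sqrt_sq (by norm_num)]

set_option maxHeartbeats 1000000 in
private lemma coord_bound (θ₀ : ℝ) (h0 : 0 ≤ θ₀) (h6 : θ₀ < Real.pi / 6)
    (p q N : ℝ) (hN : N^2 = p^2 + q^2 + (p+q)^2) (hNpos : 0 < N)
    (hp : Real.sqrt 6 / 3 * N * Real.cos θ₀ < |p|) :
    q * p < 0 ∧ Real.sqrt 6 / 3 * Real.cos (θ₀ + Real.pi/3) * N < |q| := by
  have hπ := Real.pi_pos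
  have hsq6 : Real.sqrt 6 ^ 2 = 6 := Real.sq_sqrt (by norm_num)
  have hsq6p : (0:ℝ) < Real.sqrt 6 := Real.sqrt_pos.mpr (by norm_num)
  have hsq2 : Real.sqrt 2 ^ 2 = 2 := Real.sq_sqrt (by norm_num)
  have hsq2n : (0:ℝ) ≤ Real.sqrt 2 := Real.sqrt_nonneg 2
  have hsq3 : Real.sqrt 3 ^ 2 = 3 := Real.sq_sqrt (by norm_num)
  have hsq3n : (0:ℝ) ≤ Real.sqrt 3 := Real.sqrt_nonneg 3
  have h63 := sqrt63
  have hcos : Real.sqrt 3 / 2 < Real.cos θ₀ := by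
    have h := Real.cos_lt_cos_of_nonneg_of_le_pi h0 (by linarith) h6
    rwa [Real.cos_pi_div_six] at h
  have hsin0 : 0 ≤ Real.sin θ₀ := Real.sin_nonneg_of_nonneg_of_le_pi h0 (by linarith)
  have hpy : Real.sin θ₀^2 + Real.cos θ₀^2 = 1 := Real.sin_sq_add_cos_sq θ₀
  have hcpos : 0 < Real.cos θ₀ := by linarith
  have habs : 0 ≤ |p| := abs_nonneg p
  -- square the hypothesis
  have hple : (0:ℝ) ≤ Real.sqrt 6 / 3 * N * Real.cos θ₀ := by positivity
  have hpsq := mul_self_lt_mul_self hple hp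
  have hpabs : |p| * |p| = p^2 := by rw [abs_mul_abs_self]; ring
  have hpe : (Real.sqrt 6 / 3 * N * Real.cos θ₀) * (Real.sqrt 6 / 3 * N * Real.cos θ₀)
      = 2/3 * Real.cos θ₀^2 * N^2 := by
    linear_combination (N^2 * Real.cos θ₀^2 / 9) * hsq6
  have hp2 : 2/3 * Real.cos θ₀^2 * N^2 < p^2 := by
    rw [← hpe, ← hpabs]; exact hpsq
  have hC2 : 3/4 < Real.cos θ₀^2 := by
    nlinarith [mul_pos (sub_pos.mpr hcos) (by linarith : (0:ℝ) < Real.cos θ₀ + Real.sqrt 3/2)]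
  have hpN : N^2/2 < p^2 := by
    have hm := mul_lt_mul_of_pos_right hC2 (show (0:ℝ) < N^2 by positivity)
    linarith
  have hqr' : q * (-(p+q)) = p^2 - N^2/2 := by linear_combination (1/2 : ℝ) * hN
  have hqr : 0 < q * (-(p+q)) := by rw [hqr']; linarith
  have hqp : q * p < 0 := by nlinarith [hqr, sq_nonneg q]
  refine ⟨hqp, ?_⟩
  have hkey : (2*q + p)^2 = 2*N^2 - 3*p^2 := by linear_combination (-2 : ℝ) * hN
  have hpy' : Real.sin θ₀^2*N^2 + Real.cos θ₀^2*N^2 = N^2 := by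
    linear_combination N^2 * hpy
  have hb2 : (2*q+p)^2 < 2*Real.sin θ₀^2*N^2 := by linarith
  have hbnn : 0 ≤ |2*q+p| := abs_nonneg _
  have hrhs : 0 ≤ Real.sqrt 2 * Real.sin θ₀ * N := by positivity
  have hb : |2*q+p| < Real.sqrt 2 * Real.sin θ₀ * N := by
    by_contra hcon
    push_neg at hcon
    have h2 := mul_self_le_mul_self hrhs hcon
    have he1 : (Real.sqrt 2 * Real.sin θ₀ * N) * (Real.sqrt 2 * Real.sin θ₀ * N)
        = 2 * Real.sin θ₀^2 * N^2 := by
      linear_combination (Real.sin θ₀^2 * N^2) * hsq2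
    have he2 : |2*q+p| * |2*q+p| = (2*q+p)^2 := by rw [abs_mul_abs_self]; ring
    rw [he1, he2] at h2
    linarith
  have htri : |p| ≤ |2*q+p| + 2*|q| := by
    have h1 := abs_add_le (2*q+p) (-(2*q))
    have h2 : (2*q+p) + -(2*q) = p := by ring
    rw [h2, abs_neg] at h1
    have h3 : |2*q| = 2*|q| := by rw [abs_mul]; simp
    linarith
  rw [Real.cos_add, Real.cos_pi_div_three, Real.sin_pi_div_three]
  have h63' : Real.sqrt 6 * (Real.sqrt 3 * (Real.sin θ₀ * N))
      = 3 * (Real.sqrt 2 * (Real.sin θ₀ * N)) := by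
    rw [← mul_assoc, ← mul_assoc, h63]; ring
  linarith [hp, hb, htri, h63']

set_option maxHeartbeats 2000000 in

/-- Geometry of tents, part (2): frequency separation. Under the stated conditions the
intervals `B_{ρ d_Γ(β)}(β_j)` and `B_{ρ d_Γ(β')}(β'_j)` in ℝ are disjoint, where
`ρ = (δ₂-δ₁)/(1+δ₁)`. -/
theorem whitney_frequency_separation (θ₀ : ℝ) (hθ0 : 0 ≤ θ₀) (hθ6 : θ₀ < Real.pi / 6)
    (j₀ : Fin 3) (Γ : Set (EuclideanSpace ℝ (Fin 3)))
    (hΓV : Γ ⊆ {ξ : EuclideanSpace ℝ (Fin 3) | ξ 0 + ξ 1 + ξ 2 = 0})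
    (hclosed : IsClosed Γ)
    (hcone : ∀ γ ∈ Γ, ∀ γ' ∈ Γ, γ ≠ γ' →
      Real.sqrt 6 / 3 * ‖γ - γ'‖ * Real.cos θ₀ < |(γ - γ') j₀|)
    (θ₁ δ₁ δ₂ ρ : ℝ)
    (hθ₁ : θ₁ = Real.pi / 18 - θ₀ / 3)
    (hδ₁ : δ₁ = Real.sin θ₁)
    (hδ₂ : δ₂ = Real.sqrt 6 / 3 * Real.cos (Real.pi / 3 + θ₀ + θ₁))
    (hρ : ρ = (δ₂ - δ₁) / (1 + δ₁))
    (t : ℝ) (ht : 0 < t)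
    (γ γ' : EuclideanSpace ℝ (Fin 3)) (hγ : γ ∈ Γ) (hγ' : γ' ∈ Γ) (hne : γ ≠ γ')
    (j : Fin 3) (horder : γ j < γ' j)
    (β β' : EuclideanSpace ℝ (Fin 3))
    (hβV : β ∈ {ξ : EuclideanSpace ℝ (Fin 3) | ξ 0 + ξ 1 + ξ 2 = 0})
    (hβ'V : β' ∈ {ξ : EuclideanSpace ℝ (Fin 3) | ξ 0 + ξ 1 + ξ 2 = 0})
    -- β ∈ W_{γ,t} \ U_γ^j with β_j < γ_j
    (hβW1 : t ≤ ‖β - γ‖) (hβW2 : ‖β - γ‖ ≤ (1 / δ₁) * infDist β Γ)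
    (hβU : ¬ |β j - γ j| ≤ δ₂ * ‖β - γ‖)
    (hβj : β j < γ j)
    -- β' ∈ W_{γ',0} \ W_{γ,δ₁t}
    (hβ'W : ‖β' - γ'‖ ≤ (1 / δ₁) * infDist β' Γ)
    (hβ'notW : ¬ (δ₁ * t ≤ ‖β' - γ‖ ∧ ‖β' - γ‖ ≤ (1 / δ₁) * infDist β' Γ)) :
    Disjoint (Metric.ball (β j) (ρ * infDist β Γ))
      (Metric.ball (β' j) (ρ * infDist β' Γ)) := by
  have hπ := Real.pi_pos
  have hπ4 := Real.pi_le_four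
  -- basic numerics about θ₁, δ₁, δ₂, ρ
  have hθ₁pos : 0 < θ₁ := by rw [hθ₁]; linarith
  have hθ₁le : θ₁ ≤ Real.pi / 18 := by rw [hθ₁]; linarith
  have hθeq : θ₀ = Real.pi / 6 - 3 * θ₁ := by rw [hθ₁]; ring
  have hδ₁pos : 0 < δ₁ := by
    rw [hδ₁]; exact Real.sin_pos_of_pos_of_lt_pi hθ₁pos (by linarith)
  have hδ₁lt : δ₁ < 1 / 2 := by
    rw [hδ₁]
    have h1 : Real.sin θ₁ < θ₁ := Real.sin_lt hθ₁pos
    linarith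
  have hsq6 : Real.sqrt 6 ^ 2 = 6 := Real.sq_sqrt (by norm_num)
  have hsq6p : (0:ℝ) < Real.sqrt 6 := Real.sqrt_pos.mpr (by norm_num)
  have hsq2 : Real.sqrt 2 ^ 2 = 2 := Real.sq_sqrt (by norm_num)
  have hsq2n : (0:ℝ) ≤ Real.sqrt 2 := Real.sqrt_nonneg 2
  have hsq2gt : 1 < Real.sqrt 2 := by nlinarith
  have h63 := sqrt63
  have hδ₂eq : δ₂ = Real.sqrt 6 / 3 * Real.sin (2 * θ₁) := by
    rw [hδ₂, show Real.pi / 3 + θ₀ + θ₁ = Real.pi / 2 - 2 * θ₁ by rw [hθeq]; ring,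
      Real.cos_pi_div_two_sub]
  have hsin2pos : 0 < Real.sin (2 * θ₁) :=
    Real.sin_pos_of_pos_of_lt_pi (by linarith) (by linarith)
  have hδ₂pos : 0 < δ₂ := by rw [hδ₂eq]; positivity
  have hcosθ₁ : Real.sqrt 3 / 2 < Real.cos θ₁ := by
    have h := Real.cos_lt_cos_of_nonneg_of_le_pi hθ₁pos.le (by linarith)
      (by linarith : θ₁ < Real.pi / 6)
    rwa [Real.cos_pi_div_six] at h
  have hδ₂δ₁ : δ₁ < δ₂ := by
    rw [hδ₂eq, hδ₁, Real.sin_two_mul]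
    have hsθ₁pos : 0 < Real.sin θ₁ := by rw [hδ₁] at hδ₁pos; exact hδ₁pos
    have hkey : 1 < Real.sqrt 6 / 3 * (2 * Real.cos θ₁) := by
      have hm := mul_lt_mul_of_pos_left hcosθ₁ hsq6p
      nlinarith [h63, hsq2gt]
    nlinarith [mul_lt_mul_of_pos_right hkey hsθ₁pos]
  have hρpos : 0 < ρ := by rw [hρ]; apply div_pos <;> linarith
  have hρδ₂ : ρ ≤ δ₂ := by
    rw [hρ, div_le_iff₀ (by linarith : (0:ℝ) < 1 + δ₁)]
    nlinarith
  have hρid : ρ * (1 + δ₁) = δ₂ - δ₁ := by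
    rw [hρ]; field_simp
  -- facts about β
  have hβγpos : 0 < ‖β - γ‖ := lt_of_lt_of_le ht hβW1
  have hdβle : infDist β Γ ≤ ‖β - γ‖ := by
    rw [← dist_eq_norm]; exact Metric.infDist_le_dist_of_mem hγ
  have hdβ0 : 0 ≤ infDist β Γ := Metric.infDist_nonneg
  have hdβ'0 : 0 ≤ infDist β' Γ := Metric.infDist_nonneg
  have hβjlt : δ₂ * ‖β - γ‖ < γ j - β j := by
    have h := lt_of_not_ge hβU
    rwa [abs_of_neg (by linarith : β j - γ j < 0), neg_sub] at h
  -- reduce disjointness to a scalar inequality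
  have key : ρ * infDist β Γ + ρ * infDist β' Γ ≤ β' j - β j := by
    rcases lt_or_ge ‖β' - γ‖ (δ₁ * t) with hA | hB1
    · -- Case A : β' is close to γ
      have hdβ'lt : infDist β' Γ ≤ ‖β' - γ‖ := by
        rw [← dist_eq_norm]; exact Metric.infDist_le_dist_of_mem hγ
      have hco : |β' j - γ j| ≤ ‖β' - γ‖ := by
        have h := coord_le_norm (β' - γ) j
        rwa [subc] at h
      have hδ₁t : δ₁ * t ≤ δ₁ * ‖β - γ‖ := mul_le_mul_of_nonneg_left hβW1 hδ₁pos.le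
      have hm1 : ρ * infDist β Γ ≤ ρ * ‖β - γ‖ :=
        mul_le_mul_of_nonneg_left hdβle hρpos.le
      have hm2 : ρ * infDist β' Γ ≤ ρ * (δ₁ * ‖β - γ‖) :=
        mul_le_mul_of_nonneg_left (by linarith) hρpos.le
      have hid : ρ * ‖β - γ‖ + ρ * (δ₁ * ‖β - γ‖) = δ₂ * ‖β - γ‖ - δ₁ * ‖β - γ‖ := by
        linear_combination ‖β - γ‖ * hρid
      have habs' : -(β' j - γ j) ≤ |β' j - γ j| := neg_le_abs _
      linarith only [hm1, hm2, hid, hβjlt, habs', hco, hA, hδ₁t]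
    · -- Case B : β' is in the tent over γ' but far from the tent over γ
      have hB2 : 1 / δ₁ * infDist β' Γ < ‖β' - γ‖ := by
        by_contra hcon
        push_neg at hcon
        exact hβ'notW ⟨hB1, hcon⟩
      have hwpos : 0 < ‖β' - γ‖ := lt_of_lt_of_le (by positivity) hB1
      have hd' : infDist β' Γ < δ₁ * ‖β' - γ‖ := by
        have h := mul_lt_mul_of_pos_left hB2 hδ₁pos
        rwa [show δ₁ * (1 / δ₁ * infDist β' Γ) = infDist β' Γ by field_simp] at h
      obtain ⟨ξ, hξΓ, hξd⟩ := hclosed.exists_infDist_eq_dist ⟨γ, hγ⟩ β'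
      have hdist : ‖β' - ξ‖ = infDist β' Γ := by rw [hξd, dist_eq_norm]
      have hξsmall : ‖β' - ξ‖ < δ₁ * ‖β' - γ‖ := by rw [hdist]; exact hd'
      have htriangle : ‖β' - γ‖ ≤ ‖β' - ξ‖ + ‖ξ - γ‖ := by
        calc ‖β' - γ‖ = ‖(β' - ξ) + (ξ - γ)‖ := by rw [sub_add_sub_cancel]
        _ ≤ ‖β' - ξ‖ + ‖ξ - γ‖ := norm_add_le _ _
      have hvpos : 0 < ‖ξ - γ‖ := by
        have hh := mul_lt_mul_of_pos_right hδ₁lt hwpos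
        linarith only [htriangle, hξsmall, hwpos, hh]
      have hξγ : γ ≠ ξ := by
        intro h; rw [← h, sub_self, norm_zero] at hvpos; exact lt_irrefl 0 hvpos
      -- sum-zero facts
      have hγV : γ 0 + γ 1 + γ 2 = 0 := hΓV hγ
      have hγ'V : γ' 0 + γ' 1 + γ' 2 = 0 := hΓV hγ'
      have hξV : ξ 0 + ξ 1 + ξ 2 = 0 := hΓV hξΓ
      have hβ'V' : β' 0 + β' 1 + β' 2 = 0 := hβ'V
      have hvs : (γ' - γ) 0 + (γ' - γ) 1 + (γ' - γ) 2 = 0 := by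
        rw [subc, subc, subc]; linarith
      have hv's : (ξ - γ) 0 + (ξ - γ) 1 + (ξ - γ) 2 = 0 := by
        rw [subc, subc, subc]; linarith
      have hws : (β' - γ) 0 + (β' - γ) 1 + (β' - γ) 2 = 0 := by
        rw [subc, subc, subc]; linarith
      -- cone conditions
      have hconeV : Real.sqrt 6 / 3 * ‖γ' - γ‖ * Real.cos θ₀ < |(γ' - γ) j₀| := by
        have h := hcone γ hγ γ' hγ' hne
        rw [norm_sub_rev γ γ'] at h
        rwa [show (γ - γ') j₀ = -((γ' - γ) j₀) by rw [subc, subc]; ring, abs_neg] at h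
      have hconeV' : Real.sqrt 6 / 3 * ‖ξ - γ‖ * Real.cos θ₀ < |(ξ - γ) j₀| := by
        have h := hcone γ hγ ξ hξΓ hξγ
        rw [norm_sub_rev γ ξ] at h
        rwa [show (γ - ξ) j₀ = -((ξ - γ) j₀) by rw [subc, subc]; ring, abs_neg] at h
      have hvnorm : 0 < ‖γ' - γ‖ := by
        rw [norm_pos_iff]; exact sub_ne_zero.mpr (Ne.symm hne)
      have hcθ₀pos : 0 < Real.cos θ₀ :=
        Real.cos_pos_of_mem_Ioo ⟨by linarith, by linarith⟩
      have hvj : 0 < (γ' - γ) j := by rw [subc]; linarith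
      -- ⟪w, v⟫ > 0
      have hwv : 0 < ⟪β' - γ, γ' - γ⟫ := by
        have huw : ‖(β' - γ) - (γ' - γ)‖ < ‖β' - γ‖ := by
          rw [sub_sub_sub_cancel_right]
          exact lt_of_le_of_lt hβ'W hB2
        have hexp := norm_sub_sq_real (β' - γ) (γ' - γ)
        have hsqq' := mul_self_lt_mul_self (norm_nonneg ((β' - γ) - (γ' - γ))) huw
        have hsqq : ‖(β' - γ) - (γ' - γ)‖^2 < ‖β' - γ‖^2 := by
          rw [pow_two, pow_two]; exact hsqq'
        linarith only [hsqq, hexp, pow_pos hvnorm 2]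
      -- the direction of w = β' - γ is close to that of v' = ξ - γ
      have hclose := close_dir (β' - γ) (ξ - γ) θ₁
        (by rw [sub_sub_sub_cancel_right, ← hδ₁]; exact hξsmall)
      -- normalized vectors
      have hwne : β' - γ ≠ 0 := by
        intro h; rw [h, norm_zero] at hwpos; exact lt_irrefl 0 hwpos
      have hv'ne : ξ - γ ≠ 0 := by
        intro h; rw [h, norm_zero] at hvpos; exact lt_irrefl 0 hvpos
      have hvne : γ' - γ ≠ 0 := sub_ne_zero.mpr (Ne.symm hne)
      have hwu : ‖(‖β' - γ‖⁻¹ • (β' - γ))‖ = 1 := norm_smul_inv_norm hwne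
      have hv'u : ‖(‖ξ - γ‖⁻¹ • (ξ - γ))‖ = 1 := norm_smul_inv_norm hv'ne
      have hvu : ‖(‖γ' - γ‖⁻¹ • (γ' - γ))‖ = 1 := norm_smul_inv_norm hvne
      -- cos θ₁ ≤ ⟪v̂', ŵ⟫
      have hiv'w : Real.cos θ₁ ≤ ⟪‖ξ - γ‖⁻¹ • (ξ - γ), ‖β' - γ‖⁻¹ • (β' - γ)⟫ := by
        rw [real_inner_smul_left, real_inner_smul_right]
        have heq2 : ‖ξ - γ‖⁻¹ * (‖β' - γ‖⁻¹ * ⟪ξ - γ, β' - γ⟫)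
            = ⟪ξ - γ, β' - γ⟫ / (‖ξ - γ‖ * ‖β' - γ‖) := by
          field_simp
        rw [heq2, le_div_iff₀ (by positivity)]
        linarith only [hclose]
      -- sign of (ξ - γ) j₀
      have hv'j₀ne : (ξ - γ) j₀ ≠ 0 := by
        intro h
        rw [h, abs_zero] at hconeV'
        have hpos : 0 < Real.sqrt 6 / 3 * ‖ξ - γ‖ * Real.cos θ₀ :=
          mul_pos (mul_pos (by positivity) hvpos) hcθ₀pos
        linarith only [hpos, hconeV']
      set s₀ : ℝ := if 0 < (ξ - γ) j₀ then 1 else -1 with hs₀def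
      have hs₀abs : s₀ * (ξ - γ) j₀ = |(ξ - γ) j₀| := by
        rw [hs₀def]; split_ifs with h
        · rw [abs_of_pos h]; ring
        · rw [abs_of_neg (lt_of_le_of_ne (not_lt.mp h) hv'j₀ne)]; ring
      have hs₀pm : s₀ = 1 ∨ s₀ = -1 := by
        rw [hs₀def]; split_ifs <;> simp
      have hc₀n : ‖s₀ • whitneyP j₀‖ = 1 := by
        rw [norm_smul, whitneyP_norm, mul_one]
        rcases hs₀pm with h | h <;> rw [h] <;> simp
      -- cos θ₀ ≤ ⟪v̂', s₀ • P j₀⟫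
      have hiv'P : Real.cos θ₀ ≤ ⟪‖ξ - γ‖⁻¹ • (ξ - γ), s₀ • whitneyP j₀⟫ :=
        inner_unit_coord (ξ - γ) hvpos hv's j₀ s₀ (Real.cos θ₀) hs₀abs (le_of_lt hconeV')
      have hθ₀θ₁le : θ₀ + θ₁ ≤ Real.pi / 2 := by rw [hθeq]; linarith
      -- cos(θ₁+θ₀) ≤ ⟪ŵ, s₀ • P j₀⟫
      have hwP := cos_tri_unit (‖ξ - γ‖⁻¹ • (ξ - γ)) (‖β' - γ‖⁻¹ • (β' - γ))
        (s₀ • whitneyP j₀) hv'u hwu hc₀n θ₁ θ₀ hθ₁pos.le (by linarith) hθ0 (by linarith)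
        hiv'w hiv'P
      -- sign of (γ' - γ) j₀ agrees with s₀
      have hvj₀ne : (γ' - γ) j₀ ≠ 0 := by
        intro h; rw [h, abs_zero] at hconeV
        have hpos : 0 < Real.sqrt 6 / 3 * ‖γ' - γ‖ * Real.cos θ₀ :=
          mul_pos (mul_pos (by positivity) hvnorm) hcθ₀pos
        linarith only [hpos, hconeV]
      have hs₀v : 0 < s₀ * (γ' - γ) j₀ := by
        by_contra hcon
        push_neg at hcon
        have hlt : s₀ * (γ' - γ) j₀ < 0 := by
          rcases lt_or_eq_of_le hcon with h | h
          · exact h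
          · exfalso
            rcases hs₀pm with h1 | h1 <;> rw [h1] at h <;> exact hvj₀ne (by linarith)
        have hnegabs : (-s₀) * (γ' - γ) j₀ = |(γ' - γ) j₀| := by
          rcases hs₀pm with h1 | h1
          · rw [h1] at hlt ⊢
            rw [abs_of_neg (by linarith : (γ' - γ) j₀ < 0)]
            ring
          · rw [h1] at hlt ⊢
            rw [abs_of_pos (by linarith : 0 < (γ' - γ) j₀)]
            ring
        have h2in := inner_unit_coord (γ' - γ) hvnorm hvs j₀ (-s₀) (Real.cos θ₀)
          hnegabs (le_of_lt hconeV)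
        have heqq : ⟪s₀ • whitneyP j₀, -(‖γ' - γ‖⁻¹ • (γ' - γ))⟫
            = ⟪‖γ' - γ‖⁻¹ • (γ' - γ), (-s₀) • whitneyP j₀⟫ := by
          rw [inner_neg_right, real_inner_smul_left, real_inner_smul_left,
            real_inner_smul_right, real_inner_smul_right,
            real_inner_comm (whitneyP j₀) (γ' - γ)]
          ring
        have hin2 : Real.cos θ₀ ≤ ⟪s₀ • whitneyP j₀, -(‖γ' - γ‖⁻¹ • (γ' - γ))⟫ := by
          rw [heqq]; exact h2in
        have hnegvu : ‖-(‖γ' - γ‖⁻¹ • (γ' - γ))‖ = 1 := by rw [norm_neg]; exact hvu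
        have hcontr := cos_tri_unit (s₀ • whitneyP j₀) (‖β' - γ‖⁻¹ • (β' - γ))
          (-(‖γ' - γ‖⁻¹ • (γ' - γ))) hc₀n hwu hnegvu (θ₁ + θ₀) θ₀
          (by linarith) (by linarith) hθ0 (by linarith)
          (by rw [real_inner_comm]; exact hwP) hin2
        have hval : ⟪‖β' - γ‖⁻¹ • (β' - γ), -(‖γ' - γ‖⁻¹ • (γ' - γ))⟫
            = -(‖β' - γ‖⁻¹ * (‖γ' - γ‖⁻¹ * ⟪β' - γ, γ' - γ⟫)) := by
          rw [inner_neg_right, real_inner_smul_left, real_inner_smul_right]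
        have hcpos2 : 0 < Real.cos (θ₁ + θ₀ + θ₀) :=
          Real.cos_pos_of_mem_Ioo ⟨by linarith, by rw [hθeq]; linarith⟩
        have hgt : 0 < ⟪‖β' - γ‖⁻¹ • (β' - γ), -(‖γ' - γ‖⁻¹ • (γ' - γ))⟫ :=
          lt_of_lt_of_le hcpos2 hcontr
        rw [hval] at hgt
        have hneg := mul_pos (mul_pos (inv_pos.mpr hwpos) (inv_pos.mpr hvnorm)) hwv
        linarith only [hgt, hneg]
      -- coordinate j of ξ - γ is positive and quantitatively large
      have hsin3pos : 0 < Real.sin (3 * θ₁) :=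
        Real.sin_pos_of_pos_of_lt_pi (by linarith) (by linarith)
      have hv'jb : Real.sqrt 6 / 3 * ‖ξ - γ‖ * Real.sin (3 * θ₁) ≤ |(ξ - γ) j|
          ∧ 0 < (ξ - γ) j := by
        by_cases hj : j = j₀
        · rw [hj]
          have hvjj : 0 < (γ' - γ) j₀ := by rw [← hj]; exact hvj
          have hs₀1 : s₀ = 1 := by
            rcases hs₀pm with h | h
            · exact h
            · exfalso; rw [h] at hs₀v; linarith
          have hv'j₀pos : 0 < (ξ - γ) j₀ := by
            rcases lt_trichotomy ((ξ - γ) j₀) 0 with h | h | h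
            · exfalso
              rw [hs₀1, one_mul, abs_of_neg h] at hs₀abs
              linarith
            · exact absurd h hv'j₀ne
            · exact h
          refine ⟨?_, hv'j₀pos⟩
          have hcs : Real.sin (3 * θ₁) ≤ Real.cos θ₀ := by
            rw [← Real.cos_pi_div_two_sub]
            exact Real.cos_le_cos_of_nonneg_of_le_pi hθ0 (by linarith)
              (by rw [hθeq]; linarith)
          have hmm := mul_le_mul_of_nonneg_left hcs
            (by positivity : (0:ℝ) ≤ Real.sqrt 6 / 3 * ‖ξ - γ‖)
          linarith only [hconeV', hmm]
        · obtain ⟨hvsign, -⟩ := coord_bound θ₀ hθ0 hθ6 ((γ' - γ) j₀) ((γ' - γ) j)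
            ‖γ' - γ‖ (sumsq3 (γ' - γ) hvs j j₀ hj) hvnorm hconeV
          obtain ⟨hv'sign, hv'mag⟩ := coord_bound θ₀ hθ0 hθ6 ((ξ - γ) j₀) ((ξ - γ) j)
            ‖ξ - γ‖ (sumsq3 (ξ - γ) hv's j j₀ hj) hvpos hconeV'
          have hvj₀neg : (γ' - γ) j₀ < 0 := by nlinarith only [hvj, hvsign]
          have hs₀m1 : s₀ = -1 := by
            rcases hs₀pm with h | h
            · exfalso; rw [h, one_mul] at hs₀v; linarith
            · exact h
          have hv'j₀neg : (ξ - γ) j₀ < 0 := by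
            rw [hs₀m1] at hs₀abs
            rcases lt_trichotomy ((ξ - γ) j₀) 0 with h | h | h
            · exact h
            · exact absurd h hv'j₀ne
            · exfalso; rw [abs_of_pos h] at hs₀abs; linarith
          have hv'jpos : 0 < (ξ - γ) j := by nlinarith only [hv'sign, hv'j₀neg]
          refine ⟨?_, hv'jpos⟩
          have hca : Real.cos (θ₀ + Real.pi / 3) = Real.sin (3 * θ₁) := by
            rw [show θ₀ + Real.pi / 3 = Real.pi / 2 - 3 * θ₁ by rw [hθeq]; ring,
              Real.cos_pi_div_two_sub]
          rw [hca] at hv'mag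
          linarith only [hv'mag]
      obtain ⟨hv'mag2, hv'jpos⟩ := hv'jb
      -- final rotation : sin 2θ₁ ≤ ⟪ŵ, P j⟫
      have habs1 : (1:ℝ) * (ξ - γ) j = |(ξ - γ) j| := by rw [abs_of_pos hv'jpos]; ring
      have hiv'Pj : Real.cos (Real.pi / 2 - 3 * θ₁)
          ≤ ⟪‖ξ - γ‖⁻¹ • (ξ - γ), (1:ℝ) • whitneyP j⟫ :=
        inner_unit_coord (ξ - γ) hvpos hv's j 1 _ habs1
          (by rw [Real.cos_pi_div_two_sub]; exact hv'mag2)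
      have hPju : ‖(1:ℝ) • whitneyP j‖ = 1 := by rw [one_smul]; exact whitneyP_norm j
      have hfin := cos_tri_unit (‖ξ - γ‖⁻¹ • (ξ - γ)) (‖β' - γ‖⁻¹ • (β' - γ))
        ((1:ℝ) • whitneyP j) hv'u hwu hPju θ₁ (Real.pi / 2 - 3 * θ₁) hθ₁pos.le
        (by linarith) (by linarith) (by linarith) hiv'w hiv'Pj
      rw [show θ₁ + (Real.pi / 2 - 3 * θ₁) = Real.pi / 2 - 2 * θ₁ by ring,
        Real.cos_pi_div_two_sub, one_smul] at hfin
      have hwj := coord_of_inner (β' - γ) hwpos hws j (Real.sin (2 * θ₁)) hfin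
      have hwj' : δ₂ * ‖β' - γ‖ ≤ (β' - γ) j := by rw [hδ₂eq]; linarith only [hwj]
      have hm1 : ρ * infDist β Γ ≤ δ₂ * ‖β - γ‖ := mul_le_mul hρδ₂ hdβle hdβ0 hδ₂pos.le
      have hm2 : ρ * infDist β' Γ ≤ δ₂ * ‖β' - γ‖ := by
        apply mul_le_mul hρδ₂ _ hdβ'0 hδ₂pos.le
        linarith only [hd', mul_lt_mul_of_pos_right hδ₁lt hwpos, hwpos]
      have hcw : (β' - γ) j = β' j - γ j := subc β' γ j
      linarith only [hβjlt, hwj', hm1, hm2, hcw]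
  have hd : ρ * infDist β Γ + ρ * infDist β' Γ ≤ dist (β j) (β' j) := by
    rw [Real.dist_eq]
    have h1 : β' j - β j ≤ |β j - β' j| := by
      rw [abs_sub_comm]; exact le_abs_self _
    linarith
  exact Metric.ball_disjoint_ball hd
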